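/- Let G be a graph, let S ⊆ V(G) be such that G − S is bipartite, and let c : S → {0,1} be a proper 2-coloring of the induced subgraph G[S]. Then either c can be extended to a proper 2-coloring of all of G, or there exist a connected component C of G − S, vertices p, q ∈ N_G(C) ⊆ S, and a p–q path P all of whose internal vertices lie in V(G) \ S (and in fact in C), such that either P has an odd number of internal vertices and c(p) ≠ c(q), or P has an even number of internal vertices and c(p) = c(q). Moreover P is simple except possibly for p = q, in which case P is an odd cycle through p. -/

import Mathlib

/-!
Fix a proper 2-coloring `f` of `G − S`. On each component `K` of `G − S` the only proper
2-colorings are `f` and its complement `!f`, so `c` extends to `G` unless, for some `K`, both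
choices clash with `c` on an edge between `S` and `K`: `f u = c p` and `!f w = c q` for edges
`pu`, `qw` with `u, w ∈ K`. A `u`–`w` path in `K` has even length iff `f u = f w`, and
extending it by `p` and `q` gives the required path (or odd cycle when `p = q`).
-/

variable {V : Type}

/-- The graph obtained from `G` by deleting the vertex set `S`
(deleted vertices are kept as isolated vertices). -/
def gdelete (G : SimpleGraph V) (S : Set V) : SimpleGraph V where
  Adj u v := G.Adj u v ∧ u ∉ S ∧ v ∉ S
  symm := by constructor; intro u v h; exact ⟨h.1.symm, h.2.2, h.2.1⟩
  loopless := by constructor; intro v h; exact G.ne_of_adj h.1 rfl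

/-- The subgraph of `G` induced by the vertex set `A`
(vertices outside `A` are kept as isolated vertices). -/
def grestrict (G : SimpleGraph V) (A : Set V) : SimpleGraph V := gdelete G Aᶜ

/-- The open neighborhood `N_G(C)` of a vertex set `C`. -/
def gnbhd (G : SimpleGraph V) (C : Set V) : Set V := {v | v ∉ C ∧ ∃ u ∈ C, G.Adj u v}

/-- `C` is (the vertex set of) a connected component of the induced subgraph `G[A]`:
`C ⊆ A`, `C` is nonempty and connected, and `C` is closed under adjacency within `A`. -/
def IsCompOf (G : SimpleGraph V) (A C : Set V) : Prop :=
  C ⊆ A ∧ C.Nonempty ∧ (∀ u ∈ C, ∀ v ∈ C, (grestrict G C).Reachable u v) ∧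
    ∀ u ∈ C, ∀ v ∈ A, G.Adj u v → v ∈ C

/-- The set of internal vertices of a walk `W : G.Walk p q`
(all support vertices except the endpoints `p` and `q`). -/
def walkInterior {G : SimpleGraph V} {p q : V} (W : G.Walk p q) : Set V :=
  {v | v ∈ W.support ∧ v ≠ p ∧ v ≠ q}

open SimpleGraph

variable {G : SimpleGraph V} {S C : Set V} {c : V → Bool}

namespace SimpleGraph.Walk

variable {p q u w : V}

lemma IsPath.cons_concat {P : G.Walk u w} (hP : P.IsPath) (hp : p ∉ P.support)
    (hq : q ∉ P.support) (hpq : p ≠ q) (hpu : G.Adj p u) (hwq : G.Adj w q) :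
    (cons hpu (P.concat hwq)).IsPath := by
  rw [cons_isPath_iff, support_concat]
  exact ⟨hP.concat hq hwq, by simp [hp, hpq]⟩

lemma IsPath.cons_concat_isCycle {P : G.Walk u w} (hP : P.IsPath) (hp : p ∉ P.support)
    (huw : u ≠ w) (hpu : G.Adj p u) (hwp : G.Adj w p) :
    (cons hpu (P.concat hwp)).IsCycle := by
  rw [cons_isCycle_iff, edges_concat, List.concat_eq_append, List.mem_append,
    List.mem_singleton, Sym2.eq_iff]
  refine ⟨hP.concat hp hwp, ?_⟩
  rintro (h | ⟨rfl, -⟩ | ⟨-, h⟩)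
  · exact hp (fst_mem_support_of_mem_edges _ h)
  · exact hp P.end_mem_support
  · exact huw h

lemma mem_support_of_mem_walkInterior_cons_concat {P : G.Walk u w} {hpu : G.Adj p u}
    {hwq : G.Adj w q} {x : V} (hx : x ∈ walkInterior (cons hpu (P.concat hwq))) :
    x ∈ P.support := by
  obtain ⟨hx, hxp, hxq⟩ := hx
  simpa [hxp, hxq] using hx

end SimpleGraph.Walk

lemma exists_obstruction_walk {p q u w : V} (P : G.Walk u w) (hP : P.IsPath)
    (hPC : ∀ x ∈ P.support, x ∈ C) (hp : p ∉ C) (hq : q ∉ C) (hpu : G.Adj p u)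
    (hwq : G.Adj w q) (hpar : c p = c q ↔ Odd P.length) :
    ∃ W : G.Walk p q,
      (∀ v ∈ walkInterior W, v ∈ C) ∧
      ((Odd (W.length - 1) ∧ c p ≠ c q) ∨ (Even (W.length - 1) ∧ c p = c q)) ∧
      ((p ≠ q ∧ W.IsPath) ∨
        (∃ h : p = q, (W.copy rfl h.symm).IsCycle ∧ Odd W.length)) := by
  have hpP : p ∉ P.support := fun h => hp (hPC p h)
  have hqP : q ∉ P.support := fun h => hq (hPC q h)
  refine ⟨.cons hpu (P.concat hwq),
    fun x hx => hPC x (Walk.mem_support_of_mem_walkInterior_cons_concat hx), ?_⟩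
  have hlen : (Walk.cons hpu (P.concat hwq)).length - 1 = P.length + 1 := by simp
  rw [hlen, Nat.odd_add_one, Nat.even_add_one, Nat.not_odd_iff_even, Nat.not_even_iff_odd]
  rcases Nat.even_or_odd P.length with hev | hodd
  · have hcpq : c p ≠ c q := fun h => Nat.not_odd_iff_even.2 hev (hpar.1 h)
    have hpq : p ≠ q := fun h => hcpq (h ▸ rfl)
    exact ⟨.inl ⟨hev, hcpq⟩, .inl ⟨hpq, hP.cons_concat hpP hqP hpq hpu hwq⟩⟩
  refine ⟨.inr ⟨hodd, hpar.2 hodd⟩, ?_⟩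
  by_cases hpq : p = q
  · subst hpq
    have huw : u ≠ w := by
      rintro rfl
      exact Nat.not_odd_zero ((Walk.isPath_iff_nil.1 hP).length_eq_zero ▸ hodd)
    exact .inr ⟨rfl, hP.cons_concat_isCycle hpP huw hpu hwq, by simpa [Nat.odd_add_one]⟩
  · exact .inl ⟨hpq, hP.cons_concat hpP hqP hpq hpu hwq⟩

lemma gdelete_le : gdelete G S ≤ G := fun _ _ h => h.1

namespace SimpleGraph.ConnectedComponent

variable {K : (gdelete G S).ConnectedComponent}

/-- Vertices of `S` are isolated in `G − S`. -/
lemma supp_subset_compl_of_mem {v : V} (hv : v ∈ K.supp) (hvS : v ∉ S) : K.supp ⊆ Sᶜ := by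
  intro x hx
  obtain ⟨P⟩ := K.reachable_of_mem_supp hx hv
  cases P with
  | nil => exact hvS
  | cons h _ => exact h.2.1

lemma mem_supp_of_adj_of_notMem (hK : K.supp ⊆ Sᶜ) {x y : V} (hx : x ∈ K.supp) (hy : y ∉ S)
    (h : G.Adj x y) : y ∈ K.supp :=
  K.mem_supp_of_adj_mem_supp hx ⟨h, hK hx, hy⟩

lemma isCompOf_supp (hK : K.supp ⊆ Sᶜ) : IsCompOf G Sᶜ K.supp := by
  refine ⟨hK, K.nonempty_supp, fun u hu v hv => ?_,
    fun u hu v hv h => mem_supp_of_adj_of_notMem hK hu hv h⟩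
  let φ : K.toSimpleGraph →g grestrict G K.supp :=
    ⟨Subtype.val, fun {x y} h => ⟨h.1, not_not.2 x.2, not_not.2 y.2⟩⟩
  exact (K.reachable_toSimpleGraph hu hv).map φ

lemma gnbhd_supp_subset (hK : K.supp ⊆ Sᶜ) : gnbhd G K.supp ⊆ S := by
  rintro x ⟨hxK, u, hu, hux⟩
  by_contra hxS
  exact hxK (mem_supp_of_adj_of_notMem hK hu hxS hux)

end SimpleGraph.ConnectedComponent

section Extension

variable (f : (gdelete G S).Coloring Bool)

lemma exists_extension_of_forall_component (hc : ∀ u ∈ S, ∀ v ∈ S, G.Adj u v → c u ≠ c v)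
    (hK : ∀ K : (gdelete G S).ConnectedComponent, ∃ b : Bool,
      ∀ p ∈ S, ∀ u ∈ K.supp, u ∉ S → G.Adj p u → (b ^^ f u) ≠ c p) :
    ∃ c' : V → Bool, (∀ v ∈ S, c' v = c v) ∧ ∀ u v : V, G.Adj u v → c' u ≠ c' v := by
  classical
  choose b hb using hK
  refine ⟨fun v => if v ∈ S then c v else (b ((gdelete G S).connectedComponentMk v) ^^ f v),
    fun v hv => if_pos hv, ?_⟩
  have hmixed : ∀ p ∈ S, ∀ u ∉ S, G.Adj p u →
      c p ≠ (b ((gdelete G S).connectedComponentMk u) ^^ f u) := fun p hp u hu h =>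
    (hb _ p hp u ConnectedComponent.connectedComponentMk_mem hu h).symm
  intro u v huv
  by_cases hu : u ∈ S <;> by_cases hv : v ∈ S <;> simp only [hu, hv, if_true, if_false]
  · exact hc u hu v hv huv
  · exact hmixed u hu v hv huv
  · exact (hmixed v hv u hu huv.symm).symm
  · have hadj : (gdelete G S).Adj u v := ⟨huv, hu, hv⟩
    rw [ConnectedComponent.sound hadj.reachable]
    simpa using f.valid hadj

lemma exists_obstruction_of_component {K : (gdelete G S).ConnectedComponent}
    (hK : ∀ b : Bool, ∃ p ∈ S, ∃ u ∈ K.supp, u ∉ S ∧ G.Adj p u ∧ (b ^^ f u) = c p) :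
    ∃ C : Set V, IsCompOf G Sᶜ C ∧ gnbhd G C ⊆ S ∧
      ∃ p q : V, p ∈ gnbhd G C ∧ q ∈ gnbhd G C ∧
        ∃ W : G.Walk p q,
          (∀ v ∈ walkInterior W, v ∈ C) ∧
          ((Odd (W.length - 1) ∧ c p ≠ c q) ∨ (Even (W.length - 1) ∧ c p = c q)) ∧
          ((p ≠ q ∧ W.IsPath) ∨
            (∃ h : p = q, (W.copy rfl h.symm).IsCycle ∧ Odd W.length)) := by
  obtain ⟨p, hpS, u, huK, huS, hpu, hcp⟩ := hK false
  obtain ⟨q, hqS, w, hwK, -, hqw, hcq⟩ := hK true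
  have hKS := K.supp_subset_compl_of_mem huK huS
  have hpK : p ∉ K.supp := fun h => hKS h hpS
  have hqK : q ∉ K.supp := fun h => hKS h hqS
  obtain ⟨Q, hQ⟩ := (K.reachable_toSimpleGraph huK hwK).exists_isPath
  let φ : K.toSimpleGraph →g G := (Hom.ofLE gdelete_le).comp K.toSimpleGraph_hom
  have hpar : c p = c q ↔ Odd (Q.map φ).length := by
    rw [Walk.length_map, Coloring.odd_length_iff_not_congr (f.comp K.toSimpleGraph_hom) Q,
      ← hcp, ← hcq]
    change _ ↔ (¬ f u = true ↔ f w = true)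
    cases f u <;> cases f w <;> decide
  refine ⟨K.supp, K.isCompOf_supp hKS, K.gnbhd_supp_subset hKS, p, q, ⟨hpK, u, huK, hpu.symm⟩,
    ⟨hqK, w, hwK, hqw.symm⟩, exists_obstruction_walk (Q.map φ) (hQ.map Subtype.val_injective)
      ?_ hpK hqK hpu hqw.symm hpar⟩
  intro x hx
  obtain ⟨y, -, rfl⟩ := List.mem_map.1 (Walk.support_map φ Q ▸ hx)
  exact y.2

end Extension

theorem stmt0_general (G : SimpleGraph V) (S : Set V)
    (hbip : (gdelete G S).Colorable 2) (c : V → Bool)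
    (hc : ∀ u ∈ S, ∀ v ∈ S, G.Adj u v → c u ≠ c v) :
    (∃ c' : V → Bool, (∀ v ∈ S, c' v = c v) ∧ ∀ u v : V, G.Adj u v → c' u ≠ c' v) ∨
    (∃ C : Set V, IsCompOf G Sᶜ C ∧ gnbhd G C ⊆ S ∧
      ∃ p q : V, p ∈ gnbhd G C ∧ q ∈ gnbhd G C ∧
        ∃ W : G.Walk p q,
          (∀ v ∈ walkInterior W, v ∈ C) ∧
          ((Odd (W.length - 1) ∧ c p ≠ c q) ∨ (Even (W.length - 1) ∧ c p = c q)) ∧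
          ((p ≠ q ∧ W.IsPath) ∨
            (∃ h : p = q, (W.copy rfl h.symm).IsCycle ∧ Odd W.length))) := by
  obtain ⟨col⟩ := hbip
  let f := recolorOfEquiv _ finTwoEquiv col
  by_cases hK : ∀ K : (gdelete G S).ConnectedComponent, ∃ b : Bool,
      ∀ p ∈ S, ∀ u ∈ K.supp, u ∉ S → G.Adj p u → (b ^^ f u) ≠ c p
  · exact .inl (exists_extension_of_forall_component f hc hK)
  · push Not at hK
    obtain ⟨K, hK⟩ := hK
    exact .inr (exists_obstruction_of_component f hK)

/-- 2-coloring extension lemma: if `G − S` is bipartite and `c` properly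
2-colors `G[S]`, then either `c` extends to a proper 2-coloring of all of `G`, or there
is a connected component `C` of `G − S`, vertices `p, q ∈ N_G(C) ⊆ S` and a `p`–`q` path
`P` with all internal vertices in `C`, such that `P` has an odd number of internal
vertices and `c(p) ≠ c(q)`, or an even number of internal vertices and `c(p) = c(q)`;
moreover `P` is simple except possibly `p = q`, in which case `P` is an odd cycle. -/
theorem stmt0 [Fintype V] (G : SimpleGraph V) (S : Set V)
    (hbip : (gdelete G S).Colorable 2) (c : V → Bool)
    (hc : ∀ u ∈ S, ∀ v ∈ S, G.Adj u v → c u ≠ c v) :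
    (∃ c' : V → Bool, (∀ v ∈ S, c' v = c v) ∧ ∀ u v : V, G.Adj u v → c' u ≠ c' v) ∨
    (∃ C : Set V, IsCompOf G Sᶜ C ∧ gnbhd G C ⊆ S ∧
      ∃ p q : V, p ∈ gnbhd G C ∧ q ∈ gnbhd G C ∧
        ∃ W : G.Walk p q,
          (∀ v ∈ walkInterior W, v ∈ C) ∧
          ((Odd (W.length - 1) ∧ c p ≠ c q) ∨ (Even (W.length - 1) ∧ c p = c q)) ∧
          ((p ≠ q ∧ W.IsPath) ∨
            (∃ h : p = q, (W.copy rfl h.symm).IsCycle ∧ Odd W.length))) :=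
  stmt0_general G S hbip c hc
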